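/- For any insertion redex (S,P,T,Γ,σ,τ), the syntactic complexity strictly decreases under insertion of arguments: sc(σ≪P,τ≫) < sc(σ). -/

import Mathlib

universe u

/-- Natural (Hessenberg) sum of ordinals, as `Ordinal.nadd` was defined in Mathlib
(December 2024); it has since been removed from Mathlib. -/
noncomputable def Ordinal.nadd (a b : Ordinal.{u}) : Ordinal.{u} :=
  max (Ordinal.blsub.{u, u} a fun a' _ => Ordinal.nadd a' b)
    (Ordinal.blsub.{u, u} b fun b' _ => Ordinal.nadd a b')
termination_by (a, b)
decreasing_by
  all_goals first
    | exact Prod.Lex.left _ _ (by assumption)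
    | exact Prod.Lex.right _ (by assumption)

infixl:65 " ♯ " => Ordinal.nadd

namespace Catt

/-! ### Finite planar rooted trees -/

abbrev Path := List ℕ

inductive Tree : Type
  | node : List Tree → Tree

/-- The list of child subtrees. -/
def Tree.children : Tree → List Tree
  | .node ts => ts

/-- Trunk height. -/
def Tree.th : Tree → ℕ
  | .node [t] => t.th + 1
  | _ => 0

/-- Dimension of a tree. -/
def Tree.dim : Tree → ℕ
  | .node [] => 0
  | .node (t :: ts) => max (t.dim + 1) (Tree.dim (.node ts))

/-- A tree is linear when its trunk height equals its dimension. -/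
def Tree.linear (T : Tree) : Prop := T.th = T.dim

/-- The linear tree of dimension `n` (the `n`-disc). -/
def discTree : ℕ → Tree
  | 0 => .node []
  | n + 1 => .node [discTree n]

/-- Suspension of a tree. -/
def Tree.susp (T : Tree) : Tree := .node [T]

/-- Subtree of `T` indexed by a list of naturals. -/
def Tree.subtree : List ℕ → Tree → Tree
  | [], T => T
  | k :: P, T => Tree.subtree P (T.children.getD k (.node []))

/-- Validity of a variable path in (the pasting context generated by) a tree:
a path `k₁ :: ⋯ :: kᵣ :: [j]` descends through children `kᵢ` and ends in the
`j`-th 0-dimensional endpoint of the resulting node. -/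
inductive IsPath : Tree → Path → Prop
  | point (ts : List Tree) (j : ℕ) : j ≤ ts.length → IsPath (.node ts) [j]
  | deeper (ts : List Tree) (k : ℕ) (p : Path) : k < ts.length →
      IsPath (ts.getD k (.node [])) p → IsPath (.node ts) (k :: p)

/-- Paths of locally maximal variables. -/
inductive IsMaxPath : Tree → Path → Prop
  | here : IsMaxPath (.node []) [0]
  | there (ts : List Tree) (k : ℕ) (p : Path) : k < ts.length →
      IsMaxPath (ts.getD k (.node [])) p → IsMaxPath (.node ts) (k :: p)

/-- A branch of a tree: a non-empty index list whose subtree is linear. -/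
inductive IsBranch : Tree → List ℕ → Prop
  | here (ts : List Tree) (k : ℕ) : k < ts.length → (ts.getD k (.node [])).linear →
      IsBranch (.node ts) [k]
  | there (ts : List Tree) (k : ℕ) (P : List ℕ) : k < ts.length → P ≠ [] →
      IsBranch (ts.getD k (.node [])) P → IsBranch (.node ts) (k :: P)

/-- The path of the unique locally maximal variable of a linear tree. -/
def Tree.maxPath : Tree → Path
  | .node [] => [0]
  | .node (t :: _) => 0 :: t.maxPath

/-- The locally maximal variable `⌊P⌋` corresponding to a branch `P` of `S`. -/
def branchVar : List ℕ → Tree → Path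
  | [], S => S.maxPath
  | [k], S => k :: (S.children.getD k (.node [])).maxPath
  | k :: P, S => k :: branchVar P (S.children.getD k (.node []))

/-- Branch height `bh(P)`. -/
def bh (P : List ℕ) : ℕ := P.length - 1

/-- Leaf height `lh(P)`, the dimension of `⌊P⌋`. -/
def lh (P : List ℕ) (S : Tree) : ℕ := (branchVar P S).length - 1

/-- The inserted tree `S ≪ P , T ≫`. -/
def insTree : List ℕ → Tree → Tree → Tree
  | [], S, _ => S
  | [k], S, T => .node (S.children.take k ++ T.children ++ S.children.drop (k + 1))
  | k :: P, S, T =>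
      .node (S.children.take k ++
        [insTree P (S.children.getD k (.node [])) (T.children.headD (.node []))] ++
        S.children.drop (k + 1))

/-- The branch of `S ≪ P , T ≫` induced by a branch `Q` of `T`. -/
def insBranch : List ℕ → List ℕ → List ℕ
  | [], Q => Q
  | [k], q :: Q => (q + k) :: Q
  | [k], [] => [k]
  | k :: P, Q => k :: insBranch P (Q.drop 1)

/-- The boundary `∂ₙ` of a tree (truncation at depth `n`). -/
def Tree.bdry : ℕ → Tree → Tree
  | 0, _ => .node []
  | _ + 1, .node [] => .node []
  | n + 1, .node (t :: ts) => .node (Tree.bdry n t :: (Tree.bdry (n + 1) (.node ts)).children)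

/-! ### Syntax of Catt -/

mutual
inductive Ty : Type
  | star : Ty
  | arr : Tm → Ty → Tm → Ty
inductive Tm : Type
  | var : Path → Tm
  | coh : Tree → Ty → (Path → Tm) → Tm
end

/-- A substitution assigns a term to each variable (path). -/
abbrev Sub := Path → Tm

/-- Contexts: named contexts whose variable names are paths. -/
abbrev Ctx := List (Path × Ty)

def Ty.dim : Ty → ℕ
  | .star => 0
  | .arr _ A _ => A.dim + 1

def Tm.dim : Tm → ℕ
  | .var p => p.length - 1
  | .coh _ A _ => A.dim

/-- Applying a substitution to a term. -/
def Tm.sub : Tm → Sub → Tm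
  | .var p, σ => σ p
  | .coh T A τ, σ => .coh T A (fun p => (τ p).sub σ)

/-- Applying a substitution to a type. -/
def Ty.sub : Ty → Sub → Ty
  | .star, _ => .star
  | .arr s A t, σ => .arr (s.sub σ) (A.sub σ) (t.sub σ)

/-- Composition of substitutions, diagrammatic order: `(σ.comp τ) = σ` followed by `τ`. -/
def Sub.comp (σ τ : Sub) : Sub := fun p => (σ p).sub τ

/-- The identity substitution. -/
def Sub.id : Sub := fun p => .var p

/-! ### Suspension -/

mutual
/-- Suspension of a term. -/
def Tm.susp : Tm → Tm
  | .var p => .var (0 :: p)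
  | .coh T A σ => .coh T.susp A.susp (fun p => match p with
      | [j] => .var [j]
      | 0 :: q => (σ q).susp
      | _ => .var p)
/-- Suspension of a type. -/
def Ty.susp : Ty → Ty
  | .star => .arr (.var [0]) .star (.var [1])
  | .arr s A t => .arr s.susp A.susp t.susp
end

/-- Suspension of a substitution. -/
def suspSub (σ : Sub) : Sub := fun p => match p with
  | [j] => .var [j]
  | 0 :: q => (σ q).susp
  | _ => .var p

/-- Suspension of a context. -/
def ctxSusp (Γ : Ctx) : Ctx :=
  ([0], .star) :: ([1], .star) :: Γ.map (fun e => (0 :: e.1, e.2.susp))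

/-- The substitution renaming a suspended term into the `k`-th wedge component
of a tree: `N ↦ [k]`, `S ↦ [k+1]`, `0 :: q ↦ k :: q`. -/
def compSub (k : ℕ) : Sub := fun p => match p with
  | [j] => .var [j + k]
  | 0 :: q => .var (k :: q)
  | _ => .var p

/-- The substitution including a tree as `m` consecutive wedge components
starting at offset `k`. -/
def wedgeShift (k : ℕ) : Sub := fun p => match p with
  | j :: q => .var ((j + k) :: q)
  | [] => .var []

/-- The type of the variable at path `p` in the pasting context of a tree. -/
def pathType : Path → Tree → Ty
  | [], _ => .star
  | [_], _ => .star
  | k :: p, S => ((pathType p (S.children.getD k (.node []))).susp).sub (compSub k)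

/-- All variable paths of a tree, with an offset for the 0-dimensional endpoints. -/
def treePathsAux : Tree → ℕ → List Path
  | .node [], k => [[k]]
  | .node (t :: ts), k =>
      [k] :: (treePathsAux t 0).map (k :: ·) ++ treePathsAux (.node ts) (k + 1)

/-- All variable paths of a tree. -/
def treePaths (T : Tree) : List Path := treePathsAux T 0

/-- The pasting context `⌊T⌋` generated by a tree. -/
def treeCtx (T : Tree) : Ctx := (treePaths T).map (fun p => (p, pathType p T))

/-! ### Disc substitutions and unbiased constructions -/

/-- The list of source/target pairs of a type, lowest dimension first. -/
def Ty.srcs : Ty → List (Tm × Tm)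
  | .star => []
  | .arr s A t => A.srcs ++ [(s, t)]

/-- The substitution `{A, u} : D^{dim A} → Γ` from a disc determined by a type
and a term. -/
def discSub (A : Ty) (u : Tm) : Sub := fun p =>
  let L := A.srcs
  let k := p.length - 1
  if k < L.length then
    (if p.getLastD 0 = 0 then (L.getD k (u, u)).1 else (L.getD k (u, u)).2)
  else u

/-- The boundary inclusion `δₙᵉ : ∂ₙ T → T` (`ε = false` is the source). -/
def incl (ε : Bool) : ℕ → Tree → Sub
  | 0, T => fun _ => if ε then .var [T.children.length] else .var [0]
  | n + 1, T => fun p => match p with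
      | [] => .var []
      | [j] => .var [j]
      | i :: q => ((incl ε n (T.children.getD i (.node []))) q).susp.sub (compSub i)

open Classical in
mutual
/-- The unbiased type `𝒰_T^n`. -/
noncomputable def unbiasedType : Tree → ℕ → Ty
  | _, 0 => .star
  | T, n + 1 =>
      .arr ((unbiasedTm (Tree.bdry n T) n).sub (incl false n T))
           (unbiasedType T n)
           ((unbiasedTm (Tree.bdry n T) n).sub (incl true n T))
termination_by T n => 2 * n
/-- The unbiased term `𝒯_T^n`. -/
noncomputable def unbiasedTm : Tree → ℕ → Tm
  | T, n =>
      if T = discTree n then .var T.maxPath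
      else .coh T (unbiasedType T n) (fun p => .var p)
termination_by T n => 2 * n + 1
end

/-- The unbiased coherence `𝒞_T^n`. -/
noncomputable def unbiasedCoh (T : Tree) (n : ℕ) : Tm :=
  .coh T (unbiasedType T n) (fun p => .var p)

/-- The identity coherence `𝟙` on a term `u` of type `A`. -/
noncomputable def idCoh (A : Ty) (u : Tm) : Tm :=
  (unbiasedCoh (discTree A.dim) (A.dim + 1)).sub (discSub A u)

/-! ### Insertion -/

/-- The interior substitution `ι : T → S ≪ P , T ≫`. -/
def iota : List ℕ → Tree → Tree → Sub
  | [], _, _ => fun p => .var p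
  | [k], _, _ => wedgeShift k
  | k :: P, S, T => fun p =>
      ((suspSub (iota P (S.children.getD k (.node [])) (T.children.headD (.node [])))) p).sub
        (compSub k)

/-- The exterior substitution `κ : S → S ≪ P , T ≫`. -/
noncomputable def kappa : List ℕ → Tree → Tree → Sub
  | [], _, _ => fun p => .var p
  | [k], S, T =>
      let m := T.children.length
      let n := (S.children.getD k (.node [])).dim + 1
      fun p => match p with
        | [] => .var []
        | [j] => if j ≤ k then .var [j] else .var [j + m - 1]
        | i :: q =>
          if i < k then .var (i :: q)
          else if i = k then
            ((discSub (unbiasedType T n) (unbiasedCoh T n)) (0 :: q)).sub (wedgeShift k)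
          else .var ((i + m - 1) :: q)
  | k :: P, S, T => fun p => match p with
      | [] => .var []
      | [j] => .var [j]
      | i :: q =>
        if i = k then
          ((suspSub (kappa P (S.children.getD k (.node [])) (T.children.headD (.node []))))
            (0 :: q)).sub (compSub k)
        else .var (i :: q)

/-- The inserted substitution `σ ≪ P , τ ≫ : S ≪ P , T ≫ → Γ`. -/
def insSub : List ℕ → Tree → Tree → Sub → Sub → Sub
  | [], _, _, σ, _ => σ
  | [k], _, T, σ, τ =>
      let m := T.children.length
      fun p => match p with
        | [] => σ []
        | [j] => if j < k then σ [j] else if j ≤ k + m then τ [j - k] else σ [j - m + 1]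
        | i :: q =>
          if i < k then σ (i :: q)
          else if i < k + m then τ ((i - k) :: q)
          else σ ((i - m + 1) :: q)
  | k :: P, S, T, σ, τ => fun p => match p with
      | [] => σ []
      | [j] => if j = k then τ [0] else if j = k + 1 then τ [1] else σ [j]
      | i :: q =>
        if i = k then
          insSub P (S.children.getD k (.node [])) (T.children.headD (.node []))
            (fun r => σ (k :: r)) (fun r => τ (0 :: r)) q
        else σ (i :: q)

/-! ### Syntactic equality (α-equality; substitutions are compared on all
valid variable paths of the relevant tree) -/

mutual
inductive TmEqv : Tm → Tm → Prop
  | var (p : Path) : TmEqv (.var p) (.var p)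
  | coh (T : Tree) (A B : Ty) (σ τ : Sub) : TyEqv A B →
      (∀ p, IsPath T p → TmEqv (σ p) (τ p)) → TmEqv (.coh T A σ) (.coh T B τ)
inductive TyEqv : Ty → Ty → Prop
  | star : TyEqv .star .star
  | arr {s s' t t' : Tm} {A A' : Ty} : TmEqv s s' → TyEqv A A' → TmEqv t t' →
      TyEqv (.arr s A t) (.arr s' A' t')
end

/-- Syntactic equality of substitutions out of (the context of) a tree. -/
def SubEqv (dom : Tree) (σ τ : Sub) : Prop := ∀ p, IsPath dom p → TmEqv (σ p) (τ p)

/-- Syntactic equality of substitutions on all locally maximal variables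
(`σ ≡ᵐᵃˣ τ`). -/
def MaxEqv (dom : Tree) (σ τ : Sub) : Prop := ∀ p, IsMaxPath dom p → TmEqv (σ p) (τ p)

/-! ### Insertion points and redexes -/

/-- An insertion point `(S, P, T)`. -/
def InsPoint (S : Tree) (P : List ℕ) (T : Tree) : Prop :=
  IsBranch S P ∧ bh P ≤ T.th

/-- An insertion redex `(S, P, T, Γ, σ, τ)` (the codomain context is implicit in
the raw substitutions): `⌊P⌋[σ] ≡ 𝒞_T^{lh(P)}[τ]`. -/
def InsRedex (S : Tree) (P : List ℕ) (T : Tree) (σ τ : Sub) : Prop :=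
  InsPoint S P T ∧ TmEqv (σ (branchVar P S)) ((unbiasedCoh T (lh P S)).sub τ)

/-! ### Identities, rewrite rules, reduction -/

/-- Identity terms: terms of the form `𝟙[σ]`. -/
def isIdentity (t : Tm) : Prop :=
  ∃ n σ, t = .coh (discTree n) (unbiasedType (discTree n) (n + 1)) σ

/-- The three generating rewrite rules of Catt_sua: disc removal,
endo-coherence removal, and insertion. -/
inductive SuaRule : Tm → Tm → Prop
  | disc (n : ℕ) (σ : Sub) :
      SuaRule (.coh (discTree n) (unbiasedType (discTree n) n) σ) (σ (discTree n).maxPath)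
  | ecr (T : Tree) (s : Tm) (A : Ty) (σ : Sub) :
      ¬ isIdentity (.coh T (.arr s A s) σ) →
      SuaRule (.coh T (.arr s A s) σ) (idCoh (A.sub σ) (s.sub σ))
  | ins (S T : Tree) (P : List ℕ) (A : Ty) (σ τ : Sub) :
      InsRedex S P T σ τ →
      (lh P S = T.dim ∨ T = discTree (lh P S - 1)) →
      ¬ isIdentity (.coh S A σ) →
      SuaRule (.coh S A σ)
        (.coh (insTree P S T) (A.sub (kappa P S T)) (insSub P S T σ τ))

mutual
/-- One-step reduction, flagged by whether the derivation uses the cell rule. -/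
inductive Red : Bool → Tm → Tm → Prop
  | rule {s t : Tm} : SuaRule s t → Red false s t
  | cell {b : Bool} {A B : Ty} (T : Tree) (σ : Sub) : RedTy b A B →
      Red true (.coh T A σ) (.coh T B σ)
  | arg {b : Bool} (T : Tree) (A : Ty) (σ τ : Sub) (p : Path) : IsPath T p →
      Red b (σ p) (τ p) → (∀ q, IsPath T q → q ≠ p → TmEqv (σ q) (τ q)) →
      Red b (.coh T A σ) (.coh T A τ)
inductive RedTy : Bool → Ty → Ty → Prop
  | src {b : Bool} {s s' t : Tm} {A : Ty} : Red b s s' → RedTy b (.arr s A t) (.arr s' A t)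
  | base {b : Bool} {s t : Tm} {A A' : Ty} : RedTy b A A' → RedTy b (.arr s A t) (.arr s A' t)
  | tgt {b : Bool} {s t t' : Tm} {A : Ty} : Red b t t' → RedTy b (.arr s A t) (.arr s A t')
end

/-- One-step reduction of terms. -/
def Red1 (s t : Tm) : Prop := ∃ b, Red b s t

/-- Multi-step reduction of terms. -/
def RedStar : Tm → Tm → Prop := Relation.ReflTransGen Red1

/-- Multi-step reduction of types. -/
def RedTyStar : Ty → Ty → Prop := Relation.ReflTransGen (fun A B => ∃ b, RedTy b A B)

/-- One-step reduction of substitutions out of a tree, flagged. -/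
def RedSubF (b : Bool) (dom : Tree) (σ τ : Sub) : Prop :=
  ∃ p, IsPath dom p ∧ Red b (σ p) (τ p) ∧ ∀ q, IsPath dom q → q ≠ p → TmEqv (σ q) (τ q)

/-! ### Free variables and support -/

mutual
inductive FvTm : Tm → Path → Prop
  | var (p : Path) : FvTm (.var p) p
  | coh {T : Tree} {A : Ty} {σ : Sub} {p q : Path} : IsPath T p → FvTm (σ p) q →
      FvTm (.coh T A σ) q
inductive FvTy : Ty → Path → Prop
  | src {s t : Tm} {A : Ty} {q : Path} : FvTm s q → FvTy (.arr s A t) q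
  | base {s t : Tm} {A : Ty} {q : Path} : FvTy A q → FvTy (.arr s A t) q
  | tgt {s t : Tm} {A : Ty} {q : Path} : FvTm t q → FvTy (.arr s A t) q
end

/-- Downward closure of a set of variables in a context. -/
inductive Closure (Γ : Ctx) (P : Path → Prop) : Path → Prop
  | base {p : Path} : P p → Closure Γ P p
  | step {p q : Path} {A : Ty} : Closure Γ P p → (p, A) ∈ Γ → FvTy A q → Closure Γ P q

/-- Support of a term. -/
def Tm.supp (Γ : Ctx) (t : Tm) : Set Path := {q | Closure Γ (FvTm t) q}

/-- Support of a substitution out of a tree. -/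
def subSupp (Γ : Ctx) (dom : Tree) (σ : Sub) : Set Path :=
  {q | Closure Γ (fun r => ∃ p, IsPath dom p ∧ FvTm (σ p) r) q}

/-! ### Typing and definitional equality, parameterized by a rule set -/

mutual
inductive CtxTy (R : Ctx → Tm → Tm → Prop) : Ctx → Prop
  | nil : CtxTy R []
  | cons {Γ : Ctx} {p : Path} {A : Ty} : CtxTy R Γ → TyTy R Γ A →
      CtxTy R ((p, A) :: Γ)
inductive TyTy (R : Ctx → Tm → Tm → Prop) : Ctx → Ty → Prop
  | star {Γ : Ctx} : TyTy R Γ .star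
  | arr {Γ : Ctx} {s t : Tm} {A : Ty} : TyTy R Γ A → TmTy R Γ s A → TmTy R Γ t A →
      TyTy R Γ (.arr s A t)
inductive TmTy (R : Ctx → Tm → Tm → Prop) : Ctx → Tm → Ty → Prop
  | var {Γ : Ctx} {p : Path} {A : Ty} : CtxTy R Γ → (p, A) ∈ Γ → TmTy R Γ (.var p) A
  | coh {Γ : Ctx} (S : Tree) (s t : Tm) (A : Ty) (σ : Sub) :
      TyTy R (treeCtx S) (.arr s A t) →
      (∀ p B, (p, B) ∈ treeCtx S → TmTy R Γ (σ p) (B.sub σ)) →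
      Tm.supp (treeCtx S) s =
        subSupp (treeCtx S) (Tree.bdry (S.dim - 1) S) (incl false (S.dim - 1) S) →
      Tm.supp (treeCtx S) t =
        subSupp (treeCtx S) (Tree.bdry (S.dim - 1) S) (incl true (S.dim - 1) S) →
      TmTy R Γ (.coh S (.arr s A t) σ) ((Ty.arr s A t).sub σ)
  | cohFull {Γ : Ctx} (S : Tree) (s t : Tm) (A : Ty) (σ : Sub) :
      TyTy R (treeCtx S) (.arr s A t) →
      (∀ p B, (p, B) ∈ treeCtx S → TmTy R Γ (σ p) (B.sub σ)) →
      Tm.supp (treeCtx S) s = {q | IsPath S q} →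
      Tm.supp (treeCtx S) t = {q | IsPath S q} →
      TmTy R Γ (.coh S (.arr s A t) σ) ((Ty.arr s A t).sub σ)
  | conv {Γ : Ctx} {u : Tm} {A B : Ty} : TmTy R Γ u A → TyEq R Γ A B → TmTy R Γ u B
inductive TmEq (R : Ctx → Tm → Tm → Prop) : Ctx → Tm → Tm → Prop
  | var {Γ : Ctx} (p : Path) : TmEq R Γ (.var p) (.var p)
  | symm {Γ : Ctx} {s t : Tm} : TmEq R Γ s t → TmEq R Γ t s
  | trans {Γ : Ctx} {s t u : Tm} : TmEq R Γ s t → TmEq R Γ t u → TmEq R Γ s u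
  | coh {Γ : Ctx} (S : Tree) (A B : Ty) (σ τ : Sub) : TyEq R (treeCtx S) A B →
      (∀ p C, (p, C) ∈ treeCtx S → TmEq R Γ (σ p) (τ p)) →
      TmEq R Γ (.coh S A σ) (.coh S B τ)
  | rule {Γ : Ctx} {s t : Tm} (A : Ty) : R Γ s t → TmTy R Γ s A → TmEq R Γ s t
inductive TyEq (R : Ctx → Tm → Tm → Prop) : Ctx → Ty → Ty → Prop
  | star {Γ : Ctx} : TyEq R Γ .star .star
  | arr {Γ : Ctx} {s s' t t' : Tm} {A A' : Ty} : TmEq R Γ s s' → TyEq R Γ A A' →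
      TmEq R Γ t t' → TyEq R Γ (.arr s A t) (.arr s' A' t')
end

/-- Well-typedness of a substitution: `Γ ⊢ σ : Δ`. -/
def SubTyped (R : Ctx → Tm → Tm → Prop) (Γ : Ctx) (σ : Sub) (Δ : Ctx) : Prop :=
  ∀ p A, (p, A) ∈ Δ → TmTy R Γ (σ p) (A.sub σ)

/-- Definitional equality of substitutions with domain `Δ`: `Γ ⊢ σ = τ`. -/
def SubDefEq (R : Ctx → Tm → Tm → Prop) (Γ Δ : Ctx) (σ τ : Sub) : Prop :=
  ∀ p A, (p, A) ∈ Δ → TmEq R Γ (σ p) (τ p)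

/-- Definitional equality of substitutions out of a tree on all locally maximal
variables (`σ =ᵐᵃˣ τ`). -/
def MaxDefEq (R : Ctx → Tm → Tm → Prop) (Γ : Ctx) (dom : Tree) (σ τ : Sub) : Prop :=
  ∀ p, IsMaxPath dom p → TmEq R Γ (σ p) (τ p)

/-! ### Conditions on rule sets -/

/-- The lifting condition. -/
def LiftCond (R : Ctx → Tm → Tm → Prop) : Prop :=
  ∀ Γ s t q A, R Γ s t → (∃ B, TmTy R ((q, A) :: Γ) s B) → TmEq R ((q, A) :: Γ) s t

/-- The substitution condition. -/
def SubCond (R : Ctx → Tm → Tm → Prop) : Prop :=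
  ∀ Γ s t Δ (σ : Sub), R Γ s t → (∀ p A, (p, A) ∈ Γ → TmTy R Δ (σ p) (A.sub σ)) →
    (∃ C, TmTy R Δ (s.sub σ) C) → TmEq R Δ (s.sub σ) (t.sub σ)

/-- The suspension condition. -/
def SuspCond (R : Ctx → Tm → Tm → Prop) : Prop :=
  ∀ Γ s t, R Γ s t → (∃ A, TmTy R (ctxSusp Γ) s.susp A) →
    TmEq R (ctxSusp Γ) s.susp t.susp

/-- A rule set is tame if it satisfies the lifting, substitution and suspension
conditions. -/
def Tame (R : Ctx → Tm → Tm → Prop) : Prop := LiftCond R ∧ SubCond R ∧ SuspCond R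

/-- The rule set generating Catt_sua. -/
def suaR : Ctx → Tm → Tm → Prop := fun _ s t => SuaRule s t

/-- The `n`-bounded restriction of the sua rule set, generating `n`-bounded
definitional equality `=ₙ`. -/
def suaBnd (n : ℕ) : Ctx → Tm → Tm → Prop := fun Γ s t => suaR Γ s t ∧ s.dim < n

/-! ### Syntactic complexity -/

open Classical in
/-- Syntactic complexity of a term: an ordinal below `ω ^ ω`. -/
noncomputable def Tm.sc : Tm → Ordinal :=
  Tm.rec (motive_1 := fun _ => Ordinal) (motive_2 := fun _ => Ordinal)
    0 (fun _ _ _ _ _ _ => 0)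
    (fun _ => 0)
    (fun T A σ _ ih =>
      (if isIdentity (.coh T A σ) then Ordinal.omega0 ^ (A.dim : Ordinal)
       else Ordinal.omega0 ^ (A.dim : Ordinal) ♯ Ordinal.omega0 ^ (A.dim : Ordinal)) ♯
        ((treePaths T).map ih).foldr (· ♯ ·) 0)

/-- Syntactic complexity of a substitution out of a tree. -/
noncomputable def scSub (dom : Tree) (σ : Sub) : Ordinal :=
  ((treePaths dom).map (fun p => (σ p).sc)).foldr (· ♯ ·) 0

/-!
The arguments of `σ≪P,τ≫` are arguments of `σ` or of `τ`, each used at most once, and the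
argument `⌊P⌋[σ]` of `σ` is not used at all: as multisets,
`args(σ≪P,τ≫) + {⌊P⌋[σ]} ≤ args(σ) + args(τ)`. Taking natural sums of complexities gives
`sc(σ≪P,τ≫) ♯ sc(⌊P⌋[σ]) ≤ sc(σ) ♯ sc(τ)`. On the other hand `⌊P⌋[σ] ≡ 𝒞_T^{lh(P)}[τ]` is a
coherence whose arguments are those of `τ`, so `sc(τ) < sc(⌊P⌋[σ])`; cancelling `sc(⌊P⌋[σ])`
gives the claim.
-/

end Catt

namespace Ordinal

theorem lt_nadd_iff {a b c : Ordinal.{u}} :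
    a < b ♯ c ↔ (∃ b' < b, a ≤ b' ♯ c) ∨ ∃ c' < c, a ≤ b ♯ c' := by
  rw [nadd]; simp [lt_blsub_iff]

theorem nadd_le_iff {a b c : Ordinal.{u}} :
    b ♯ c ≤ a ↔ (∀ b' < b, b' ♯ c < a) ∧ ∀ c' < c, b ♯ c' < a := by
  rw [nadd]; simp [blsub_le_iff]

theorem nadd_lt_nadd_left {b c : Ordinal.{u}} (h : b < c) (a : Ordinal.{u}) : a ♯ b < a ♯ c :=
  lt_nadd_iff.2 (Or.inr ⟨b, h, le_rfl⟩)

theorem nadd_lt_nadd_right {b c : Ordinal.{u}} (h : b < c) (a : Ordinal.{u}) : b ♯ a < c ♯ a :=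
  lt_nadd_iff.2 (Or.inl ⟨b, h, le_rfl⟩)

theorem nadd_left_strictMono (a : Ordinal.{u}) : StrictMono (a ♯ ·) :=
  fun _ _ h => nadd_lt_nadd_left h a

theorem nadd_right_strictMono (a : Ordinal.{u}) : StrictMono (· ♯ a) :=
  fun _ _ h => nadd_lt_nadd_right h a

theorem nadd_le_nadd_left {b c : Ordinal.{u}} (h : b ≤ c) (a : Ordinal.{u}) : a ♯ b ≤ a ♯ c :=
  (nadd_left_strictMono a).monotone h

theorem lt_of_nadd_lt_nadd_right {a b c : Ordinal.{u}} (h : b ♯ a < c ♯ a) : b < c :=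
  (nadd_right_strictMono a).lt_iff_lt.1 h

theorem nadd_comm (a b : Ordinal.{u}) : a ♯ b = b ♯ a := by
  induction a using WellFoundedLT.induction generalizing b with | ind a IHa => ?_
  induction b using WellFoundedLT.induction with | ind b IHb => ?_
  apply le_antisymm <;> rw [nadd_le_iff] <;> constructor
  · intro a' ha'; rw [IHa a' ha' b]; exact nadd_lt_nadd_left ha' b
  · intro b' hb'; rw [IHb b' hb']; exact nadd_lt_nadd_right hb' a
  · intro b' hb'; rw [← IHb b' hb']; exact nadd_lt_nadd_left hb' a
  · intro a' ha'; rw [← IHa a' ha' b]; exact nadd_lt_nadd_right ha' b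

@[simp]
theorem nadd_zero (a : Ordinal.{u}) : a ♯ 0 = a := by
  induction a using WellFoundedLT.induction with | ind a IH => ?_
  apply le_antisymm
  · rw [nadd_le_iff]
    exact ⟨fun a' ha' => by rwa [IH a' ha'], fun c' hc' => absurd hc' (zero_le (a := c')).not_gt⟩
  · refine not_lt.1 fun h => ?_
    simpa [IH _ h] using nadd_lt_nadd_right h 0

@[simp]
theorem zero_nadd (a : Ordinal.{u}) : 0 ♯ a = a := by rw [nadd_comm, nadd_zero]

theorem le_self_nadd (a b : Ordinal.{u}) : a ≤ a ♯ b := by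
  simpa using nadd_le_nadd_left (zero_le (a := b)) a

theorem nadd_assoc (a b c : Ordinal.{u}) : a ♯ b ♯ c = a ♯ (b ♯ c) := by
  induction a using WellFoundedLT.induction generalizing b c with | ind a IHa => ?_
  induction b using WellFoundedLT.induction generalizing c with | ind b IHb => ?_
  induction c using WellFoundedLT.induction with | ind c IHc => ?_
  apply le_antisymm <;> rw [nadd_le_iff] <;> constructor
  · intro x hx
    rcases lt_nadd_iff.1 hx with ⟨a', ha', hx⟩ | ⟨b', hb', hx⟩
    · calc x ♯ c ≤ a' ♯ b ♯ c := (nadd_right_strictMono c).monotone hx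
        _ = a' ♯ (b ♯ c) := IHa a' ha' b c
        _ < a ♯ (b ♯ c) := nadd_lt_nadd_right ha' _
    · calc x ♯ c ≤ a ♯ b' ♯ c := (nadd_right_strictMono c).monotone hx
        _ = a ♯ (b' ♯ c) := IHb b' hb' c
        _ < a ♯ (b ♯ c) := nadd_lt_nadd_left (nadd_lt_nadd_right hb' c) a
  · intro c' hc'
    rw [IHc c' hc']; exact nadd_lt_nadd_left (nadd_lt_nadd_left hc' b) a
  · intro a' ha'
    rw [← IHa a' ha' b c]; exact nadd_lt_nadd_right (nadd_lt_nadd_right ha' b) c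
  · intro x hx
    rcases lt_nadd_iff.1 hx with ⟨b', hb', hx⟩ | ⟨c', hc', hx⟩
    · calc a ♯ x ≤ a ♯ (b' ♯ c) := nadd_le_nadd_left hx a
        _ = a ♯ b' ♯ c := (IHb b' hb' c).symm
        _ < a ♯ b ♯ c := nadd_lt_nadd_right (nadd_lt_nadd_left hb' a) c
    · calc a ♯ x ≤ a ♯ (b ♯ c') := nadd_le_nadd_left hx a
        _ = a ♯ b ♯ c' := (IHc c' hc').symm
        _ < a ♯ b ♯ c := nadd_lt_nadd_left hc' _

instance : Std.Commutative (α := Ordinal.{u}) (· ♯ ·) := ⟨nadd_comm⟩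
instance : Std.Associative (α := Ordinal.{u}) (· ♯ ·) := ⟨nadd_assoc⟩

noncomputable def nsum (s : Multiset Ordinal.{u}) : Ordinal.{u} := s.fold (· ♯ ·) 0

theorem nsum_add (s t : Multiset Ordinal.{u}) : nsum (s + t) = nsum s ♯ nsum t := by
  simpa [nsum] using Multiset.fold_add (· ♯ ·) 0 0 s t

@[simp]
theorem nsum_singleton (a : Ordinal.{u}) : nsum {a} = a := by
  rw [nsum, Multiset.fold_singleton, nadd_zero]

theorem nsum_mono {s t : Multiset Ordinal.{u}} (h : s ≤ t) : nsum s ≤ nsum t := by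
  obtain ⟨r, rfl⟩ := Multiset.le_iff_exists_add.1 h
  rw [nsum_add]
  exact le_self_nadd _ _

end Ordinal

namespace Catt

open Ordinal

/-! ### The arguments of a substitution out of a tree -/

theorem Tree.node_children (T : Tree) : Tree.node T.children = T := by
  cases T; rfl

theorem IsPath.ne_nil {T : Tree} {p : Path} (h : IsPath T p) : p ≠ [] := by
  cases h <;> simp

theorem IsPath.modifyHead_succ {t : Tree} {ts : List Tree} {p : Path} (h : IsPath (.node ts) p) :
    IsPath (.node (t :: ts)) (p.modifyHead (· + 1)) := by
  cases h with
  | point _ j hj => exact .point _ _ (by simpa using hj)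
  | deeper _ k p hk hp => exact .deeper _ _ _ (by simpa using hk) (by simpa using hp)

theorem treePathsAux_add (l : List Tree) (k n : ℕ) :
    treePathsAux (.node l) (k + n) = (treePathsAux (.node l) k).map (List.modifyHead (· + n)) := by
  induction l generalizing k with
  | nil => simp [treePathsAux]
  | cons t ts ih =>
    rw [treePathsAux, treePathsAux, Nat.add_right_comm, ih (k + 1)]
    simp [Function.comp_def]

theorem treePaths_node_cons (t : Tree) (ts : List Tree) :
    treePaths (.node (t :: ts)) =
      [0] :: (treePaths t).map (0 :: ·) ++
        (treePaths (.node ts)).map (List.modifyHead (· + 1)) := by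
  rw [treePaths, treePathsAux, treePathsAux_add ts 0 1]; rfl

theorem isPath_of_mem_treePaths : ∀ {T : Tree} {p : Path}, p ∈ treePaths T → IsPath T p
  | .node [], p, h => by
    obtain rfl : p = [0] := by simpa [treePaths, treePathsAux] using h
    exact .point _ _ le_rfl
  | .node (t :: ts), p, h => by
    rw [treePaths_node_cons] at h
    rcases List.mem_cons.1 h with rfl | h
    · exact .point _ _ (Nat.zero_le _)
    rcases List.mem_append.1 h with h | h
    · obtain ⟨q, hq, rfl⟩ := List.mem_map.1 h
      exact .deeper _ _ _ (by simp) (isPath_of_mem_treePaths hq)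
    · obtain ⟨q, hq, rfl⟩ := List.mem_map.1 h
      exact (isPath_of_mem_treePaths hq).modifyHead_succ

theorem maxPath_mem_treePaths : ∀ T : Tree, T.maxPath ∈ treePaths T
  | .node [] => by simp [Tree.maxPath, treePaths, treePathsAux]
  | .node (t :: ts) => by
    rw [treePaths_node_cons]
    simp [Tree.maxPath, maxPath_mem_treePaths t]

def args (T : Tree) (σ : Sub) : Multiset Tm := (treePaths T).map σ

theorem apply_mem_args {T : Tree} {p : Path} (σ : Sub) (h : p ∈ treePaths T) :
    σ p ∈ args T σ :=
  Multiset.mem_coe.2 (List.mem_map_of_mem h)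

theorem args_congr {T : Tree} {σ σ' : Sub} (h : ∀ p, p ≠ [] → σ p = σ' p) :
    args T σ = args T σ' :=
  congrArg ((↑) : List Tm → Multiset Tm)
    (List.map_congr_left fun _ hp => h _ (isPath_of_mem_treePaths hp).ne_nil)

theorem args_node_nil (σ : Sub) : args (.node []) σ = {σ [0]} := by
  simp [args, treePaths, treePathsAux]

theorem args_node_cons (t : Tree) (ts : List Tree) (σ : Sub) :
    args (.node (t :: ts)) σ = σ [0] ::ₘ
      (args t (fun q => σ (0 :: q)) + args (.node ts) (σ ∘ List.modifyHead (· + 1))) := by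
  simp [args, treePaths_node_cons, Function.comp_def]

theorem args_node_update_head {l : List Tree} {σ σ' : Sub} (h : ∀ p, p ≠ [0] → σ p = σ' p) :
    args (.node l) σ + {σ' [0]} = args (.node l) σ' + {σ [0]} := by
  cases l with
  | nil => simp [args_node_nil, add_comm]
  | cons t ts =>
    have hchild : args t (fun q => σ (0 :: q)) = args t (fun q => σ' (0 :: q)) :=
      args_congr fun q hq => h _ (by simpa using hq)
    have hshift : σ ∘ List.modifyHead (· + 1) = σ' ∘ List.modifyHead (· + 1) := by
      funext p; exact h _ (by cases p <;> simp)
    simp only [args_node_cons, hchild, hshift, ← Multiset.singleton_add]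
    abel

theorem scSub_eq_nsum (T : Tree) (σ : Sub) : scSub T σ = nsum ((args T σ).map Tm.sc) := by
  simp [scSub, nsum, args, Multiset.coe_fold_r, Function.comp_def]

/-! ### Insertion uses each argument at most once and drops `⌊P⌋[σ]` -/

def InsArgsLe (S : Tree) (P : List ℕ) (T : Tree) : Prop :=
  ∀ σ τ : Sub,
    args (insTree P S T) (insSub P S T σ τ) + {σ (branchVar P S)} ≤ args S σ + args T τ

theorem insArgsLe_head_point (c : Tree) (C : List Tree) :
    InsArgsLe (.node (c :: C)) [0] (.node []) := by
  intro σ τ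
  have hins : insTree [0] (.node (c :: C)) (.node []) = .node C := by
    simp [insTree, Tree.children]
  have hbv : branchVar [0] (.node (c :: C)) = 0 :: c.maxPath := by
    simp [branchVar, Tree.children]
  -- the inserted substitution is `σ` shifted past `c`, except that it sends `[0]` to `τ [0]`
  -- instead of `σ [1]`
  have hupd : args (.node C) (insSub [0] (.node (c :: C)) (.node []) σ τ) + {σ [1]} =
      args (.node C) (σ ∘ List.modifyHead (· + 1)) + {τ [0]} := by
    refine args_node_update_head (σ := insSub [0] (.node (c :: C)) (.node []) σ τ)
      (σ' := σ ∘ List.modifyHead (· + 1)) fun p hp => ?_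
    rcases p with _ | ⟨j, _ | ⟨a, q⟩⟩ <;> simp [insSub, Tree.children] at hp ⊢
    omega
  have hx : {σ (0 :: c.maxPath)} ≤ args c (fun q => σ (0 :: q)) :=
    Multiset.singleton_le.2 (apply_mem_args _ (maxPath_mem_treePaths c))
  rw [hins, hbv, args_node_cons, args_node_nil, ← add_le_add_iff_right {σ [1]},
    add_right_comm, hupd]
  calc _ ≤ args (.node C) (σ ∘ List.modifyHead (· + 1)) + {τ [0]} +
        args c (fun q => σ (0 :: q)) := by
        gcongr
    _ ≤ args (.node C) (σ ∘ List.modifyHead (· + 1)) + {τ [0]} +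
        args c (fun q => σ (0 :: q)) + ({σ [0]} + {σ [1]}) := le_self_add
    _ = _ := by simp only [← Multiset.singleton_add]; abel

theorem insArgsLe_head_single (c : Tree) (C B : List Tree) :
    InsArgsLe (.node (c :: C)) [0] (.node B) := by
  induction B with
  | nil => exact insArgsLe_head_point c C
  | cons b B ih =>
    intro σ τ
    have hins : insTree [0] (.node (c :: C)) (.node (b :: B)) =
        .node (b :: (insTree [0] (.node (c :: C)) (.node B)).children) := by
      simp [insTree, Tree.children]
    have h0 : insSub [0] (.node (c :: C)) (.node (b :: B)) σ τ [0] = τ [0] := by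
      simp [insSub]
    have hchild : (fun q => insSub [0] (.node (c :: C)) (.node (b :: B)) σ τ (0 :: q)) =
        fun q => τ (0 :: q) := by
      funext q; cases q <;> simp [insSub, Tree.children]
    have hshift : insSub [0] (.node (c :: C)) (.node (b :: B)) σ τ ∘ List.modifyHead (· + 1) =
        insSub [0] (.node (c :: C)) (.node B) σ (τ ∘ List.modifyHead (· + 1)) := by
      funext p
      rcases p with _ | ⟨j, _ | ⟨a, q⟩⟩ <;> simp [insSub, Tree.children]
    rw [hins, args_node_cons, h0, hchild, hshift, Tree.node_children, args_node_cons b B τ]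
    calc _ = {τ [0]} + args b (fun q => τ (0 :: q)) +
          (args (insTree [0] (.node (c :: C)) (.node B))
            (insSub [0] (.node (c :: C)) (.node B) σ (τ ∘ List.modifyHead (· + 1))) +
            {σ (branchVar [0] (.node (c :: C)))}) := by
          simp only [← Multiset.singleton_add]; abel
      _ ≤ {τ [0]} + args b (fun q => τ (0 :: q)) +
          (args (.node (c :: C)) σ + args (.node B) (τ ∘ List.modifyHead (· + 1))) :=
          add_le_add le_rfl (ih σ _)
      _ = _ := by simp only [← Multiset.singleton_add]; abel

theorem InsArgsLe.head_cons {c T : Tree} {C : List Tree} {P : List ℕ} (hP : P ≠ [])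
    (h : InsArgsLe c P T) : InsArgsLe (.node (c :: C)) (0 :: P) (.node [T]) := by
  obtain ⟨p, P, rfl⟩ := List.exists_cons_of_ne_nil hP
  intro σ τ
  have hins : insTree (0 :: p :: P) (.node (c :: C)) (.node [T]) =
      .node (insTree (p :: P) c T :: C) := by
    simp [insTree, Tree.children]
  have hbv : branchVar (0 :: p :: P) (.node (c :: C)) = 0 :: branchVar (p :: P) c := by
    simp [branchVar, Tree.children]
  have h0 : insSub (0 :: p :: P) (.node (c :: C)) (.node [T]) σ τ [0] = τ [0] := by
    simp [insSub]
  have hchild : args (insTree (p :: P) c T)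
      (fun q => insSub (0 :: p :: P) (.node (c :: C)) (.node [T]) σ τ (0 :: q)) =
      args (insTree (p :: P) c T)
        (insSub (p :: P) c T (fun q => σ (0 :: q)) (fun q => τ (0 :: q))) := by
    refine args_congr fun q hq => ?_
    obtain ⟨a, q, rfl⟩ := List.exists_cons_of_ne_nil hq
    simp [insSub, Tree.children]
  -- beyond the inserted component, `σ≪P,τ≫` agrees with `σ` except that `[1] ↦ τ [1]`
  have hupd : args (.node C) (insSub (0 :: p :: P) (.node (c :: C)) (.node [T]) σ τ ∘
      List.modifyHead (· + 1)) + {σ [1]} =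
      args (.node C) (σ ∘ List.modifyHead (· + 1)) + {τ [1]} := by
    refine args_node_update_head (σ' := σ ∘ List.modifyHead (· + 1)) fun r hr => ?_
    rcases r with _ | ⟨j, _ | ⟨a, q⟩⟩ <;> simp [insSub] at hr ⊢
    omega
  have hinner := h (fun q => σ (0 :: q)) (fun q => τ (0 :: q))
  rw [hins, hbv, args_node_cons, h0, hchild, args_node_cons c C σ, args_node_cons T [] τ,
    args_node_nil, ← add_le_add_iff_right {σ [1]}]
  calc _ = {τ [0]} + (args (insTree (p :: P) c T)
          (insSub (p :: P) c T (fun q => σ (0 :: q)) (fun q => τ (0 :: q))) +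
          {σ (0 :: branchVar (p :: P) c)}) +
        (args (.node C) (insSub (0 :: p :: P) (.node (c :: C)) (.node [T]) σ τ ∘
          List.modifyHead (· + 1)) + {σ [1]}) := by
        simp only [← Multiset.singleton_add]; abel
    _ ≤ {τ [0]} + (args c (fun q => σ (0 :: q)) + args T (fun q => τ (0 :: q))) +
        (args (.node C) (σ ∘ List.modifyHead (· + 1)) + {τ [1]}) := by
        rw [hupd]; exact add_le_add (add_le_add le_rfl hinner) le_rfl
    _ ≤ {τ [0]} + (args c (fun q => σ (0 :: q)) + args T (fun q => τ (0 :: q))) +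
        (args (.node C) (σ ∘ List.modifyHead (· + 1)) + {τ [1]}) + ({σ [0]} + {σ [1]}) :=
        le_self_add
    _ = _ := by
        simp only [← Multiset.singleton_add, Function.comp_apply, List.modifyHead_cons]; abel

theorem InsArgsLe.cons_succ {s T : Tree} {ss : List Tree} {k : ℕ} {P : List ℕ}
    (h : InsArgsLe (.node ss) (k :: P) T) : InsArgsLe (.node (s :: ss)) ((k + 1) :: P) T := by
  intro σ τ
  have hins : insTree ((k + 1) :: P) (.node (s :: ss)) T =
      .node (s :: (insTree (k :: P) (.node ss) T).children) := by
    cases P <;> simp [insTree, Tree.children]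
  have hbv : branchVar ((k + 1) :: P) (.node (s :: ss)) =
      (branchVar (k :: P) (.node ss)).modifyHead (· + 1) := by
    cases P <;> simp [branchVar, Tree.children]
  have h0 : insSub ((k + 1) :: P) (.node (s :: ss)) T σ τ [0] = σ [0] := by
    cases P <;> simp [insSub]
  have hchild : (fun q => insSub ((k + 1) :: P) (.node (s :: ss)) T σ τ (0 :: q)) =
      fun q => σ (0 :: q) := by
    funext q; cases P <;> cases q <;> simp [insSub]
  have hshift : insSub ((k + 1) :: P) (.node (s :: ss)) T σ τ ∘ List.modifyHead (· + 1) =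
      insSub (k :: P) (.node ss) T (σ ∘ List.modifyHead (· + 1)) τ := by
    funext p
    cases P <;> rcases p with _ | ⟨j, _ | ⟨a, q⟩⟩ <;> simp [insSub, Tree.children] <;>
      split_ifs <;> first | rfl | omega | (congr 2; omega)
  rw [hins, args_node_cons, h0, hchild, hshift, Tree.node_children, hbv, args_node_cons s ss σ]
  calc _ = {σ [0]} + args s (fun q => σ (0 :: q)) +
        (args (insTree (k :: P) (.node ss) T)
          (insSub (k :: P) (.node ss) T (σ ∘ List.modifyHead (· + 1)) τ) +
          {(σ ∘ List.modifyHead (· + 1)) (branchVar (k :: P) (.node ss))}) := by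
        simp only [← Multiset.singleton_add, Function.comp_apply]; abel
    _ ≤ {σ [0]} + args s (fun q => σ (0 :: q)) +
        (args (.node ss) (σ ∘ List.modifyHead (· + 1)) + args T τ) :=
        add_le_add le_rfl (h _ τ)
    _ = _ := by simp only [← Multiset.singleton_add]; abel

theorem insArgsLe_single {ts : List Tree} {k : ℕ} (hk : k < ts.length) (B : List Tree) :
    InsArgsLe (.node ts) [k] (.node B) := by
  induction k generalizing ts with
  | zero =>
    obtain ⟨c, C, rfl⟩ := List.exists_cons_of_ne_nil (List.ne_nil_of_length_pos hk)
    exact insArgsLe_head_single c C B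
  | succ k ih =>
    obtain _ | ⟨s, ss⟩ := ts
    · simp at hk
    · exact (ih (by simpa using hk)).cons_succ

theorem insArgsLe_cons {ts : List Tree} {k : ℕ} {P : List ℕ} {T : Tree} (hk : k < ts.length)
    (hP : P ≠ []) (h : InsArgsLe (ts.getD k (.node [])) P T) :
    InsArgsLe (.node ts) (k :: P) (.node [T]) := by
  induction k generalizing ts with
  | zero =>
    obtain ⟨c, C, rfl⟩ := List.exists_cons_of_ne_nil (List.ne_nil_of_length_pos hk)
    exact h.head_cons hP
  | succ k ih =>
    obtain _ | ⟨s, ss⟩ := ts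
    · simp at hk
    · exact (ih (by simpa using hk) (by simpa using h)).cons_succ

theorem InsPoint.insArgsLe {S T : Tree} {P : List ℕ} (h : InsPoint S P T) : InsArgsLe S P T := by
  obtain ⟨hbr, hbh⟩ := h
  induction hbr generalizing T with
  | here ts k hk _ => exact T.node_children ▸ insArgsLe_single hk T.children
  | there ts k P hk hP _ ih =>
    have hlen : 0 < P.length := List.length_pos_of_ne_nil hP
    obtain ⟨_ | ⟨T, _ | ⟨T', Ts⟩⟩⟩ := T <;> simp only [bh, Tree.th, List.length_cons] at hbh
    · omega
    · exact insArgsLe_cons hk hP (ih (by simp only [bh]; omega))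
    · omega

/-! ### Syntactic complexity -/

theorem scSub_insSub_nadd_le {S T : Tree} {P : List ℕ} (h : InsPoint S P T) (σ τ : Sub) :
    scSub (insTree P S T) (insSub P S T σ τ) ♯ (σ (branchVar P S)).sc ≤
      scSub S σ ♯ scSub T τ := by
  have := nsum_mono (Multiset.map_le_map (f := Tm.sc) (h.insArgsLe σ τ))
  rwa [Multiset.map_add, Multiset.map_add, nsum_add, nsum_add, Multiset.map_singleton,
    nsum_singleton, ← scSub_eq_nsum, ← scSub_eq_nsum, ← scSub_eq_nsum] at this

theorem scSub_congr {T : Tree} {σ τ : Sub} (h : ∀ p, IsPath T p → Tm.sc.{u} (σ p) = Tm.sc (τ p)) :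
    scSub.{u} T σ = scSub T τ := by
  unfold scSub
  congr 1
  exact List.map_congr_left fun p hp => h p (isPath_of_mem_treePaths hp)

open Classical in
theorem Tm.sc_coh (T : Tree) (A : Ty) (σ : Sub) : (Tm.coh T A σ).sc =
    (if isIdentity (.coh T A σ) then ω ^ (A.dim : Ordinal)
     else ω ^ (A.dim : Ordinal) ♯ ω ^ (A.dim : Ordinal)) ♯ scSub T σ := rfl

theorem scSub_lt_sc_coh (T : Tree) (A : Ty) (σ : Sub) : scSub T σ < (Tm.coh T A σ).sc := by
  have hpos : (0 : Ordinal) < ω ^ (A.dim : Ordinal) := Ordinal.opow_pos _ Ordinal.omega0_pos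
  rw [Tm.sc_coh]
  refine lt_of_eq_of_lt (zero_nadd _).symm (nadd_lt_nadd_right ?_ _)
  split_ifs
  · exact hpos
  · exact hpos.trans_le (le_self_nadd _ _)

theorem TyEqv.dim_eq {A B : Ty} (h : TyEqv A B) : A.dim = B.dim := by
  refine TyEqv.rec (motive_1 := fun _ _ _ => True) (motive_2 := fun A B _ => A.dim = B.dim)
    (fun _ => trivial) (fun _ _ _ _ _ _ _ _ _ => trivial) rfl ?_ h
  intro _ _ _ _ _ _ _ _ _ _ ih _
  simp [Ty.dim, ih]

theorem TyEqv.symm {A B : Ty} (h : TyEqv A B) : TyEqv B A :=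
  TyEqv.rec (motive_1 := fun u v _ => TmEqv v u) (motive_2 := fun A B _ => TyEqv B A)
    (fun p => .var p) (fun T _ _ _ _ _ _ ihA ih => .coh T _ _ _ _ ihA ih) .star
    (fun _ _ _ ihs ihA iht => .arr ihs ihA iht) h

inductive VarTy : Ty → Prop
  | star : VarTy .star
  | arr (p q : Path) {A : Ty} : VarTy A → VarTy (.arr (.var p) A (.var q))

theorem VarTy.eq_of_tyEqv {A B : Ty} (hA : VarTy A) (h : TyEqv A B) : A = B := by
  induction hA generalizing B with
  | star => cases h; rfl
  | arr p q _ ih =>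
    cases h with
    | arr hs hAB ht => cases hs; cases ht; rw [ih hAB]

theorem compSub_eq_var (i : ℕ) (p : Path) : ∃ q, compSub i p = .var q := by
  unfold compSub; split <;> exact ⟨_, rfl⟩

theorem incl_eq_var (ε : Bool) : ∀ (n : ℕ) (T : Tree) (p : Path), ∃ q, incl ε n T p = .var q
  | 0, T, p => by cases ε <;> exact ⟨_, rfl⟩
  | n + 1, T, [] => ⟨[], rfl⟩
  | n + 1, T, [j] => ⟨[j], rfl⟩
  | n + 1, T, i :: j :: q => by
    obtain ⟨r, hr⟩ := incl_eq_var ε n (T.children.getD i (.node [])) (j :: q)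
    simp only [incl, hr, Tm.susp, Tm.sub]
    exact compSub_eq_var i (0 :: r)

theorem bdry_discTree : ∀ {m n : ℕ}, m ≤ n → Tree.bdry m (discTree n) = discTree m
  | 0, _, _ => by rw [Tree.bdry]; rfl
  | m + 1, n + 1, h => by
    simp [discTree, Tree.bdry, bdry_discTree (Nat.le_of_succ_le_succ h), Tree.children]

theorem varTy_unbiasedType_discTree :
    ∀ {m n : ℕ}, m ≤ n + 1 → VarTy (unbiasedType (discTree n) m)
  | 0, _, _ => by rw [unbiasedType]; exact .star
  | m + 1, n, h => by
    rw [unbiasedType, bdry_discTree (by omega), unbiasedTm, if_pos rfl]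
    obtain ⟨q₁, h₁⟩ := incl_eq_var false m (discTree n) (discTree m).maxPath
    obtain ⟨q₂, h₂⟩ := incl_eq_var true m (discTree n) (discTree m).maxPath
    simp only [Tm.sub, h₁, h₂]
    exact .arr q₁ q₂ (varTy_unbiasedType_discTree (by omega))

theorem isIdentity_coh_iff {T : Tree} {A : Ty} {σ : Sub} :
    isIdentity (.coh T A σ) ↔ ∃ n, T = discTree n ∧ A = unbiasedType (discTree n) (n + 1) := by
  constructor
  · rintro ⟨n, σ', h⟩
    injection h with h₁ h₂
    exact ⟨n, h₁, h₂⟩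
  · rintro ⟨n, rfl, rfl⟩
    exact ⟨n, σ, rfl⟩

/-- `isIdentity` compares types up to `=` rather than `≡`; the two agree here because the type
of an identity contains no coherences. -/
theorem isIdentity_coh_congr {T : Tree} {A B : Ty} {σ τ : Sub} (h : TyEqv A B) :
    isIdentity (.coh T A σ) ↔ isIdentity (.coh T B τ) := by
  simp only [isIdentity_coh_iff]
  constructor
  · rintro ⟨n, rfl, rfl⟩
    exact ⟨n, rfl, ((varTy_unbiasedType_discTree le_rfl).eq_of_tyEqv h).symm⟩
  · rintro ⟨n, rfl, rfl⟩
    exact ⟨n, rfl, ((varTy_unbiasedType_discTree le_rfl).eq_of_tyEqv h.symm).symm⟩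

open Classical in
theorem TmEqv.sc_eq {u v : Tm} (h : TmEqv u v) : u.sc = v.sc := by
  refine TmEqv.rec (motive_1 := fun u v _ => u.sc = v.sc) (motive_2 := fun _ _ _ => True)
    (fun _ => rfl) ?_ trivial (fun _ _ _ _ _ _ => trivial) h
  intro T A B σ τ hAB _ _ ih
  rw [Tm.sc_coh, Tm.sc_coh, hAB.dim_eq, scSub_congr ih,
    if_congr (isIdentity_coh_congr hAB) rfl rfl]

/-- For any insertion redex `(S,P,T,Γ,σ,τ)`, syntactic
complexity strictly decreases under insertion of arguments:
`sc(σ≪P,τ≫) < sc(σ)`. -/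
theorem insertion_sc_lt (S T : Tree) (P : List ℕ) (σ τ : Sub)
    (h : InsRedex S P T σ τ) :
    scSub (insTree P S T) (insSub P S T σ τ) < scSub S σ := by
  obtain ⟨hpt, heqv⟩ := h
  have hlt : scSub T τ < (σ (branchVar P S)).sc := by
    rw [heqv.sc_eq]
    exact scSub_lt_sc_coh T (unbiasedType T (lh P S)) τ
  exact lt_of_nadd_lt_nadd_right <|
    (scSub_insSub_nadd_le hpt σ τ).trans_lt (nadd_lt_nadd_left hlt _)

end Catt
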